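/- Let A be a real m×n matrix, x, p ∈ ℝⁿ with p ≠ 0 and ⟪x - p, p⟫ = 0, and set b = A·x, u = p/‖p‖, d = (A·p)/‖p‖², and Ā = A·(I - u·uᵀ). Assume Ā·Āᵀ is invertible and define v = (Ā·Āᵀ)⁻¹·(b - ⟪x, p⟫·d) and q = p + Āᵀ·v. Then ‖q‖² - ‖p‖² = ⟪b - ⟪x, p⟫·d, (Ā·Āᵀ)⁻¹·(b - ⟪x, p⟫·d)⟫. -/

import Mathlib

/-!
Since `I - u uᵀ` is the orthogonal projection onto `p⊥`, the matrix `Ā` annihilates `p`; hence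
`p` is orthogonal to every `Āᵀ v` and `‖q‖² - ‖p‖² = ‖Āᵀ v‖² = ⟪v, Ā Āᵀ v⟫`, where
`Ā Āᵀ v = b - ⟪x, p⟫ d` by the choice of `v`.
-/

open scoped RealInnerProductSpace
open Matrix

namespace Matrix

variable {n R : Type*} [Fintype n]

theorem one_sub_vecMulVec_mulVec_self [DecidableEq n] [Ring R] {u : n → R} (hu : u ⬝ᵥ u = 1) :
    (1 - vecMulVec u u) *ᵥ u = 0 := by
  simp [sub_mulVec, vecMulVec_mulVec, hu]

end Matrix

namespace EuclideanSpace

variable {m n : Type*} [Fintype m] [Fintype n]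

theorem one_sub_vecMulVec_normalize_mulVec_self [DecidableEq n] (p : EuclideanSpace ℝ n) :
    (1 - vecMulVec ((1 / ‖p‖) • p).ofLp ((1 / ‖p‖) • p).ofLp) *ᵥ p.ofLp = 0 := by
  rcases eq_or_ne p 0 with rfl | hp
  · simp
  have hunit : ((1 / ‖p‖) • p).ofLp ⬝ᵥ ((1 / ‖p‖) • p).ofLp = 1 := by
    have h := inner_eq_star_dotProduct ((1 / ‖p‖) • p) ((1 / ‖p‖) • p)
    rw [star_trivial, real_inner_self_eq_norm_sq] at h
    rw [← h, norm_smul, norm_div, norm_one, norm_norm, one_div_mul_cancel (by simpa), one_pow]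
  have hp_eq : p.ofLp = ‖p‖ • ((1 / ‖p‖) • p).ofLp := by
    simp [smul_smul, norm_ne_zero_iff.mpr hp]
  rw [hp_eq, mulVec_smul, one_sub_vecMulVec_mulVec_self hunit, smul_zero]

theorem inner_toLp_transpose_mulVec (B : Matrix m n ℝ) (p : EuclideanSpace ℝ n) (v : m → ℝ) :
    ⟪p, WithLp.toLp 2 (Bᵀ *ᵥ v)⟫ = v ⬝ᵥ B *ᵥ p.ofLp := by
  rw [inner_eq_star_dotProduct, star_trivial, mulVec_transpose, dotProduct_mulVec]

theorem norm_sq_toLp_transpose_mulVec (B : Matrix m n ℝ) (v : m → ℝ) :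
    ‖WithLp.toLp 2 (Bᵀ *ᵥ v)‖ ^ 2 = v ⬝ᵥ (B * Bᵀ) *ᵥ v := by
  rw [← real_inner_self_eq_norm_sq, inner_toLp_transpose_mulVec, ← mulVec_mulVec]

end EuclideanSpace

theorem ap_rank_one_step_norm_gain {m n : ℕ}
    (A : Matrix (Fin m) (Fin n) ℝ)
    (x p : EuclideanSpace ℝ (Fin n))
    (b : EuclideanSpace ℝ (Fin m))
    (u : EuclideanSpace ℝ (Fin n)) (hu : u = (1 / ‖p‖) • p)
    (d : EuclideanSpace ℝ (Fin m))
    (Abar : Matrix (Fin m) (Fin n) ℝ) (hAbar : Abar = A * (1 - vecMulVec u u))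
    (hinv : IsUnit (Abar * Abarᵀ))
    (v : EuclideanSpace ℝ (Fin m)) (hv : v = (Abar * Abarᵀ)⁻¹.mulVec (b - ⟪x, p⟫ • d))
    (Atv : EuclideanSpace ℝ (Fin n)) (hAtv : Atv = Abarᵀ.mulVec v)
    (q : EuclideanSpace ℝ (Fin n)) (hq : q = p + Atv) :
    ‖q‖ ^ 2 - ‖p‖ ^ 2
      = ⟪b - ⟪x, p⟫ • d,
          (WithLp.toLp 2 ((Abar * Abarᵀ)⁻¹.mulVec (b - ⟪x, p⟫ • d)) : EuclideanSpace ℝ (Fin m))⟫ := by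
  have hAbar_p : Abar *ᵥ p.ofLp = 0 := by
    rw [hAbar, hu, ← mulVec_mulVec, EuclideanSpace.one_sub_vecMulVec_normalize_mulVec_self,
      mulVec_zero]
  have hgram_v : (Abar * Abarᵀ) *ᵥ v.ofLp = (b - ⟪x, p⟫ • d).ofLp := by
    rw [hv, mulVec_mulVec, mul_nonsing_inv _ ((isUnit_iff_isUnit_det _).mp hinv), one_mulVec]
    rfl
  have hAtv_toLp : Atv = WithLp.toLp 2 (Abarᵀ *ᵥ v.ofLp) := by rw [← hAtv]
  have horth : ⟪p, Atv⟫ = 0 := by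
    rw [hAtv_toLp, EuclideanSpace.inner_toLp_transpose_mulVec, hAbar_p, dotProduct_zero]
  calc ‖q‖ ^ 2 - ‖p‖ ^ 2 = ‖Atv‖ ^ 2 := by rw [hq, norm_add_sq_real, horth]; ring
    _ = v.ofLp ⬝ᵥ (b - ⟪x, p⟫ • d).ofLp := by
      rw [hAtv_toLp, EuclideanSpace.norm_sq_toLp_transpose_mulVec, hgram_v]
    _ = ⟪b - ⟪x, p⟫ • d, v⟫ := by
      rw [EuclideanSpace.inner_eq_star_dotProduct (b - _), star_trivial]
    _ = _ := by rw [← hv, WithLp.toLp_ofLp]
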